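/- Let E be a real normed vector space, let K ≥ 0, Δt > 0, and let L : E → E be a continuous linear map with operator norm ‖L‖ ≤ 1 + K·Δt. Let 𝔗 : E → E be any map satisfying ‖𝔗 x‖ ≤ ‖x‖ for all x ∈ E. Define a sequence v : ℕ → E by the recurrence v(k+1) = 𝔗(L(v k)). Then for every final time T ≥ 0 and every n ∈ ℕ with n·Δt ≤ T, one has ‖v n‖ ≤ exp(K·T)·‖v 0‖. -/
import Mathlib


/-- Stability of rank-truncated linear multistep methods: if the linear
time-stepping operator `L` satisfies the Lax-stability bound `‖L‖ ≤ 1 + K·Δt`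
and the truncation map `𝔗` is norm-nonincreasing, then the truncated scheme
`v (k+1) = 𝔗 (L (v k))` satisfies `‖v n‖ ≤ exp (K·T) · ‖v 0‖` whenever
`n·Δt ≤ T`. -/
theorem truncated_lmm_stability
    {E : Type*} [NormedAddCommGroup E] [NormedSpace ℝ E]
    (K Δt : ℝ) (hK : 0 ≤ K) (hΔt : 0 < Δt)
    (L : E →L[ℝ] E) (hL : ‖L‖ ≤ 1 + K * Δt)
    (𝔗 : E → E) (h𝔗 : ∀ x : E, ‖𝔗 x‖ ≤ ‖x‖)
    (v : ℕ → E) (hv : ∀ k : ℕ, v (k + 1) = 𝔗 (L (v k))) :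
    ∀ T : ℝ, 0 ≤ T → ∀ n : ℕ, (n : ℝ) * Δt ≤ T →
      ‖v n‖ ≤ Real.exp (K * T) * ‖v 0‖ := by
  intro T hT n hn
  have hpos : (0:ℝ) ≤ 1 + K * Δt := by positivity
  have hstep : ∀ k, ‖v (k+1)‖ ≤ (1 + K * Δt) * ‖v k‖ := fun k => by
    calc ‖v (k+1)‖ = ‖𝔗 (L (v k))‖ := by rw [hv]
      _ ≤ ‖L (v k)‖ := h𝔗 _
      _ ≤ ‖L‖ * ‖v k‖ := L.le_opNorm _
      _ ≤ (1 + K * Δt) * ‖v k‖ := by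
          exact mul_le_mul_of_nonneg_right hL (norm_nonneg _)
  have hgeo : ∀ m, ‖v m‖ ≤ (1 + K * Δt) ^ m * ‖v 0‖ := by
    intro m
    induction m with
    | zero => simp
    | succ k ih =>
        calc ‖v (k+1)‖ ≤ (1 + K * Δt) * ‖v k‖ := hstep k
          _ ≤ (1 + K * Δt) * ((1 + K * Δt) ^ k * ‖v 0‖) :=
              mul_le_mul_of_nonneg_left ih hpos
          _ = (1 + K * Δt) ^ (k+1) * ‖v 0‖ := by ring
  have hexp : (1 + K * Δt) ^ n ≤ Real.exp (K * T) := by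
    calc (1 + K * Δt) ^ n ≤ (Real.exp (K * Δt)) ^ n := by
          apply pow_le_pow_left₀ hpos
          linarith [Real.add_one_le_exp (K * Δt)]
      _ = Real.exp (n * (K * Δt)) := by
          rw [← Real.exp_nat_mul]
      _ ≤ Real.exp (K * T) := by
          apply Real.exp_le_exp.mpr
          have : (n:ℝ) * (K * Δt) = K * ((n:ℝ) * Δt) := by ring
          rw [this]
          exact mul_le_mul_of_nonneg_left hn hK
  calc ‖v n‖ ≤ (1 + K * Δt) ^ n * ‖v 0‖ := hgeo n
    _ ≤ Real.exp (K * T) * ‖v 0‖ :=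
        mul_le_mul_of_nonneg_right hexp (norm_nonneg _)
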